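/- arXiv:1212.5671 — 2 statements merged into one kernel-verified Lean document; each statement's English description precedes it below -/
import Mathlib

section
/- (Pliss lemma) If nonnegative real numbers $a_0, a_1, \dots, a_n$ satisfy $a_0 + \dots + a_n \le (n+1)C$ for some $C > 0$, then there exists $k \le n$ such that for every $j$ with $0 \le j \le k$, one has $a_{k-j} + a_{k-j+1} + \dots + a_k \le (j+1)C$. -/
/-!
Put `g m = a₀ + ⋯ + a_{m-1} - m C`. The sum hypothesis says `g (n + 1) ≤ g 0`, and the
conclusion says that `g (k + 1) ≤ g t` for all `t ≤ k`. So it suffices to take for `k + 1` a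
point of `{1, …, n + 1}` where `g` is smallest: it also beats `g 0`, since `g 0 ≥ g (n + 1)`.
-/

open Finset

theorem exists_le_forall_apply_succ_le_of_apply_succ_le_apply_zero {α : Type*} [LinearOrder α]
    {f : ℕ → α} {n : ℕ} (h : f (n + 1) ≤ f 0) :
    ∃ k ≤ n, ∀ t ≤ k, f (k + 1) ≤ f t := by
  obtain ⟨k, hk, hmin⟩ := exists_min_image (range (n + 1)) (fun i => f (i + 1)) nonempty_range_add_one
  refine ⟨k, Nat.lt_succ_iff.mp (mem_range.mp hk), fun t ht => ?_⟩
  rcases t with _ | s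
  · exact (hmin n (self_mem_range_succ n)).trans h
  · exact hmin s (mem_range.mpr (by grind))

theorem sum_Icc_eq_sum_range_sub {M : Type*} [AddCommGroup M] (a : ℕ → M) {i k : ℕ} (h : i ≤ k) :
    ∑ x ∈ Icc i k, a x = ∑ x ∈ range (k + 1), a x - ∑ x ∈ range i, a x := by
  rw [← Ico_add_one_right_eq_Icc, sum_Ico_eq_sub a (by omega)]

theorem pliss_lemma_general (n : ℕ) (C : ℝ) (a : ℕ → ℝ)
    (hsum : ∑ i ∈ Finset.range (n + 1), a i ≤ ((n : ℝ) + 1) * C) :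
    ∃ k ≤ n, ∀ j ≤ k, ∑ i ∈ Finset.Icc (k - j) k, a i ≤ ((j : ℝ) + 1) * C := by
  set g : ℕ → ℝ := fun m => ∑ i ∈ range m, a i - m * C with hg
  have hg_end : g (n + 1) ≤ g 0 := by
    simp only [hg, range_zero, sum_empty, Nat.cast_add, Nat.cast_one, CharP.cast_eq_zero]
    linarith
  obtain ⟨k, hkn, hk⟩ := exists_le_forall_apply_succ_le_of_apply_succ_le_apply_zero hg_end
  refine ⟨k, hkn, fun j hj => ?_⟩
  have hmin := hk (k - j) (Nat.sub_le k j)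
  simp only [hg, Nat.cast_sub hj, Nat.cast_add, Nat.cast_one] at hmin
  rw [sum_Icc_eq_sum_range_sub a (Nat.sub_le k j)]
  linarith

/-- Pliss lemma: from an average bound on the whole sum, extract an index `k`
where all backward partial sums ending at `k` satisfy the average bound. -/
theorem pliss_lemma (n : ℕ) (C : ℝ) (hC : 0 < C) (a : ℕ → ℝ)
    (ha : ∀ i ≤ n, 0 ≤ a i)
    (hsum : ∑ i ∈ Finset.range (n + 1), a i ≤ ((n : ℝ) + 1) * C) :
    ∃ k ≤ n, ∀ j ≤ k, ∑ i ∈ Finset.Icc (k - j) k, a i ≤ ((j : ℝ) + 1) * C :=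
  pliss_lemma_general n C a hsum
end

section
/- Let $g : [a,b] \to \mathbb{R}$ be differentiable with $0 < g'(y) \le 1 - A_0|y|^\alpha$ for all $y \in [a,b]$, where $A_0 > 0$ and $\alpha \in (0,1)$. Let $\varepsilon > 0$ and $\theta_\varepsilon$ be the uniform probability measure on $[-\varepsilon,\varepsilon]$. Let $J \subset [a+\varepsilon, b-\varepsilon]$ be an interval and $\widehat{J} = J \setminus [-2\varepsilon, 2\varepsilon]$. Then $\int_{-\varepsilon}^{\varepsilon} |g(J+t)| \, d\theta_\varepsilon(t) \le |J| - A_1 |\widehat{J}|^{1+\alpha}$ where $A_1 = A_0 2^{-\alpha}/(1+\alpha)$ and $|\cdot|$ denotes Lebesgue measure. -/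
/-! For a noise value `t`, `g` is monotone on `J + t`, so
`|g(J + t)| ≤ ∫_{J+t} g' ≤ |J| - A₀ ∫_{J+t} |y|^α`. Since `|t| ≤ ε`, the parts of `J` beyond `±2ε`
stay on their side of `0` after the shift, so pieces of lengths `v` and `u` contribute at least
`(v^{1+α} + u^{1+α}) / (1+α)` to the last integral, and the power-mean inequality
`(v + u)^{1+α} ≤ 2^α (v^{1+α} + u^{1+α})` turns this into `2^{-α} |Ĵ|^{1+α} / (1+α)`.
Averaging over `t` preserves the bound. -/

open MeasureTheory Set

lemma Real.rpow_add_le_mul_rpow_add_rpow {u v p : ℝ} (hu : 0 ≤ u) (hv : 0 ≤ v) (hp : 1 ≤ p) :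
    (u + v) ^ p ≤ 2 ^ (p - 1) * (u ^ p + v ^ p) := by
  lift u to NNReal using hu
  lift v to NNReal using hv
  exact_mod_cast NNReal.rpow_add_le_mul_rpow_add_rpow u v hp

lemma Real.two_rpow_neg_mul_add_rpow_le {u v α : ℝ} (hu : 0 ≤ u) (hv : 0 ≤ v) (hα : 0 ≤ α) :
    2 ^ (-α) * (u + v) ^ (1 + α) ≤ u ^ (1 + α) + v ^ (1 + α) := by
  have h := rpow_add_le_mul_rpow_add_rpow hu hv (p := 1 + α) (by linarith)
  rwa [add_sub_cancel_left, ← inv_mul_le_iff₀ (by positivity), ← rpow_neg zero_le_two] at h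

lemma disjoint_inter_Iio_neg_inter_Ioi {S : Set ℝ} {s : ℝ} (hs : 0 ≤ s) :
    Disjoint (S ∩ Iio (-s)) (S ∩ Ioi s) :=
  disjoint_left.2 fun y hy₁ hy₂ => by linarith [show y < -s from hy₁.2, show s < y from hy₂.2]

lemma measure_diff_Icc_neg_eq_add {μ : Measure ℝ} {S : Set ℝ} {s : ℝ} (hS : MeasurableSet S)
    (hs : 0 ≤ s) : μ (S \ Icc (-s) s) = μ (S ∩ Iio (-s)) + μ (S ∩ Ioi s) := by
  have hsplit : S \ Icc (-s) s = (S ∩ Iio (-s)) ∪ (S ∩ Ioi s) := by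
    ext y
    simp only [mem_sdiff, mem_Icc, mem_union, mem_inter_iff, mem_Iio, mem_Ioi, not_and_or, not_le]
    tauto
  rw [hsplit, measure_union (disjoint_inter_Iio_neg_inter_Ioi hs) (hS.inter measurableSet_Ioi)]

lemma volume_image_Ioo_le_integral_of_deriv_le {g g' φ : ℝ → ℝ} {p q : ℝ} (hpq : p ≤ q)
    (hg : ∀ y ∈ Icc p q, HasDerivAt g (g' y) y) (hg'_nonneg : ∀ y ∈ Icc p q, 0 ≤ g' y)
    (hg'_le : ∀ y ∈ Icc p q, g' y ≤ φ y) (hφ : IntegrableOn φ (Icc p q)) :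
    (volume (g '' Ioo p q)).toReal ≤ ∫ y in p..q, φ y := by
  have hcont : ContinuousOn g (Icc p q) := fun y hy => (hg y hy).continuousAt.continuousWithinAt
  have hmono : MonotoneOn g (Icc p q) :=
    monotoneOn_of_hasDerivWithinAt_nonneg (convex_Icc p q) hcont
      (fun y hy => (hg y (interior_subset hy)).hasDerivWithinAt)
      (fun y hy => hg'_nonneg y (interior_subset hy))
  have hp : p ∈ Icc p q := left_mem_Icc.2 hpq
  have hq : q ∈ Icc p q := right_mem_Icc.2 hpq
  have himage : g '' Ioo p q ⊆ Icc (g p) (g q) := by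
    rintro _ ⟨y, hy, rfl⟩
    exact ⟨hmono hp (Ioo_subset_Icc_self hy) hy.1.le, hmono (Ioo_subset_Icc_self hy) hq hy.2.le⟩
  calc (volume (g '' Ioo p q)).toReal ≤ g q - g p :=
        ENNReal.toReal_le_of_le_ofReal (sub_nonneg.2 (hmono hp hq hpq))
          ((measure_mono himage).trans_eq Real.volume_Icc)
    _ ≤ ∫ y in p..q, φ y :=
        intervalIntegral.sub_le_integral_of_hasDeriv_right_of_le hpq hcont
          (fun y hy => (hg y (Ioo_subset_Icc_self hy)).hasDerivWithinAt) hφ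
          (fun y hy => hg'_le y (Ioo_subset_Icc_self hy))

lemma sub_rpow_div_le_integral_abs_rpow_of_nonneg {α p q : ℝ} (hα : 0 ≤ α) (hp : 0 ≤ p)
    (hpq : p ≤ q) : (q - p) ^ (1 + α) / (1 + α) ≤ ∫ y in p..q, |y| ^ α := by
  have habs : EqOn (fun y : ℝ => |y| ^ α) (fun y => y ^ α) (uIcc p q) := fun y hy => by
    rw [uIcc_of_le hpq] at hy
    simp only [abs_of_nonneg (hp.trans hy.1)]
  rw [intervalIntegral.integral_congr habs, integral_rpow (Or.inl (by linarith)), add_comm α]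
  gcongr
  have := Real.add_rpow_le_rpow_add (sub_nonneg.2 hpq) hp (p := 1 + α) (by linarith)
  rw [sub_add_cancel] at this
  linarith

lemma sub_rpow_div_le_integral_abs_rpow_of_nonpos {α p q : ℝ} (hα : 0 ≤ α) (hq : q ≤ 0)
    (hpq : p ≤ q) : (q - p) ^ (1 + α) / (1 + α) ≤ ∫ y in p..q, |y| ^ α := by
  have h := sub_rpow_div_le_integral_abs_rpow_of_nonneg hα (neg_nonneg.2 hq) (neg_le_neg hpq)
  rw [← intervalIntegral.integral_comp_neg (fun y => |y| ^ α), neg_sub_neg] at h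
  simpa only [abs_neg] using h

lemma volume_Ioo_rpow_div_le_setIntegral_abs_add_rpow {α p q t : ℝ} (hα : 0 ≤ α)
    (hside : 0 ≤ p + t ∨ q + t ≤ 0) :
    (volume (Ioo p q)).toReal ^ (1 + α) / (1 + α) ≤ ∫ y in Ioo p q, |y + t| ^ α := by
  rcases le_or_gt q p with hqp | hpq
  · simp [Ioo_eq_empty (not_lt.2 hqp), Real.zero_rpow (by linarith : 1 + α ≠ 0)]
  rw [Real.volume_Ioo, ENNReal.toReal_ofReal (by linarith), ← integral_Ioc_eq_integral_Ioo,
    ← intervalIntegral.integral_of_le hpq.le,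
    intervalIntegral.integral_comp_add_right (fun y => |y| ^ α), ← add_sub_add_right_eq_sub q p t]
  rcases hside with hp | hq
  · exact sub_rpow_div_le_integral_abs_rpow_of_nonneg hα hp (by linarith)
  · exact sub_rpow_div_le_integral_abs_rpow_of_nonpos hα hq (by linarith)

lemma rpow_add_rpow_div_le_setIntegral_abs_add_rpow {α s t c d : ℝ} (hα : 0 ≤ α)
    (hs : 0 ≤ s) (ht : t ∈ Icc (-s) s) :
    ((volume (Ioo c d ∩ Iio (-s))).toReal ^ (1 + α) +
        (volume (Ioo c d ∩ Ioi s)).toReal ^ (1 + α)) / (1 + α) ≤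
      ∫ y in Ioo c d, |y + t| ^ α := by
  have hcont : Continuous fun y : ℝ => |y + t| ^ α :=
    (continuous_abs.comp (continuous_add_const t)).rpow_const fun _ => Or.inr hα
  have hint : ∀ S ⊆ Ioo c d, IntegrableOn (fun y : ℝ => |y + t| ^ α) S :=
    fun S hS => hcont.integrableOn_Icc.mono_set (hS.trans Ioo_subset_Icc_self)
  rw [add_div]
  calc _ ≤ (∫ y in Ioo c d ∩ Iio (-s), |y + t| ^ α) + ∫ y in Ioo c d ∩ Ioi s, |y + t| ^ α := by
        rw [Ioo_inter_Iio, Ioo_inter_Ioi]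
        gcongr
        · exact volume_Ioo_rpow_div_le_setIntegral_abs_add_rpow hα
            (Or.inr (by linarith [min_le_right d (-s), ht.2]))
        · exact volume_Ioo_rpow_div_le_setIntegral_abs_add_rpow hα
            (Or.inl (by linarith [le_max_right c s, ht.1]))
    _ = ∫ y in (Ioo c d ∩ Iio (-s)) ∪ (Ioo c d ∩ Ioi s), |y + t| ^ α :=
        (setIntegral_union (disjoint_inter_Iio_neg_inter_Ioi hs)
          (measurableSet_Ioo.inter measurableSet_Ioi) (hint _ inter_subset_left)
          (hint _ inter_subset_left)).symm
    _ ≤ ∫ y in Ioo c d, |y + t| ^ α :=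
        setIntegral_mono_set (hint _ subset_rfl)
          (Filter.Eventually.of_forall fun y => Real.rpow_nonneg (abs_nonneg _) α)
          (union_subset inter_subset_left inter_subset_left).eventuallyLE

lemma inv_sub_mul_integral_le_of_forall_le {F : ℝ → ℝ} {a b K : ℝ} (hab : a < b)
    (hF_nonneg : ∀ t ∈ Icc a b, 0 ≤ F t) (hF_le : ∀ t ∈ Icc a b, F t ≤ K) :
    (b - a)⁻¹ * ∫ t in a..b, F t ≤ K := by
  have h := intervalIntegral.norm_integral_le_of_norm_le_const (f := F) (C := K) fun t ht => by
    rw [uIoc_of_le hab.le] at ht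
    rw [Real.norm_of_nonneg (hF_nonneg t (Ioc_subset_Icc_self ht))]
    exact hF_le t (Ioc_subset_Icc_self ht)
  rw [abs_of_pos (sub_pos.2 hab)] at h
  rw [inv_mul_le_iff₀ (sub_pos.2 hab), mul_comm]
  exact (Real.le_norm_self _).trans h

lemma volume_image_add_const_Ioo_le {g g' : ℝ → ℝ} {A₀ α s t c d : ℝ} (hA₀ : 0 ≤ A₀)
    (hα : 0 ≤ α) (hs : 0 ≤ s) (ht : t ∈ Icc (-s) s) (hcd : c ≤ d)
    (hg : ∀ y ∈ Icc (c + t) (d + t), HasDerivAt g (g' y) y)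
    (hg'_nonneg : ∀ y ∈ Icc (c + t) (d + t), 0 ≤ g' y)
    (hg'_le : ∀ y ∈ Icc (c + t) (d + t), g' y ≤ 1 - A₀ * |y| ^ α) :
    (volume (g '' ((fun y => y + t) '' Ioo c d))).toReal ≤
      (d - c) - A₀ * (((volume (Ioo c d ∩ Iio (-s))).toReal ^ (1 + α) +
        (volume (Ioo c d ∩ Ioi s)).toReal ^ (1 + α)) / (1 + α)) := by
  have hshift : ∀ y ∈ Icc c d, y + t ∈ Icc (c + t) (d + t) := fun y hy =>
    ⟨by linarith [hy.1], by linarith [hy.2]⟩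
  have hcont : Continuous fun y => |y + t| ^ α :=
    (continuous_abs.comp (continuous_add_const t)).rpow_const fun _ => Or.inr hα
  rw [image_image]
  calc _ ≤ ∫ y in c..d, (1 - A₀ * |y + t| ^ α) :=
        volume_image_Ioo_le_integral_of_deriv_le hcd
          (fun y hy => (hg _ (hshift y hy)).comp_add_const y t)
          (fun y hy => hg'_nonneg _ (hshift y hy)) (fun y hy => hg'_le _ (hshift y hy))
          (continuous_const.sub (continuous_const.mul hcont)).integrableOn_Icc
    _ = (d - c) - A₀ * ∫ y in Ioo c d, |y + t| ^ α := by
        rw [intervalIntegral.integral_sub intervalIntegrable_const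
            ((hcont.intervalIntegrable c d).const_mul A₀),
          intervalIntegral.integral_const, intervalIntegral.integral_const_mul,
          intervalIntegral.integral_of_le hcd, integral_Ioc_eq_integral_Ioo, smul_eq_mul, mul_one]
    _ ≤ _ := by
        gcongr
        exact rpow_add_rpow_div_le_setIntegral_abs_add_rpow hα hs ht

/-- Averaged contraction estimate (the Claim in the proof of Proposition 3.3)
for the inverse branch `g` of a map with a neutral fixed point at `0` of order
`1 + α`, under uniform additive noise of size `ε`. -/
theorem averaged_contraction (A₀ α ε a b c d : ℝ) (hA₀ : 0 < A₀)
    (hα : α ∈ Set.Ioo (0:ℝ) 1) (hε : 0 < ε) (g g' : ℝ → ℝ)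
    (hderiv : ∀ y ∈ Set.Icc a b, HasDerivAt g (g' y) y)
    (hg'pos : ∀ y ∈ Set.Icc a b, 0 < g' y)
    (hg'ub : ∀ y ∈ Set.Icc a b, g' y ≤ 1 - A₀ * |y| ^ α)
    (hJ : Set.Ioo c d ⊆ Set.Icc (a + ε) (b - ε)) :
    (2 * ε)⁻¹ * ∫ t in (-ε)..ε,
        (volume (g '' ((fun y => y + t) '' Set.Ioo c d))).toReal ≤
      (volume (Set.Ioo c d)).toReal -
        (A₀ * (2:ℝ) ^ (-α) / (1 + α)) *
          (volume (Set.Ioo c d \ Set.Icc (-(2 * ε)) (2 * ε))).toReal ^ (1 + α) := by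
  have hα₀ : 0 ≤ α := hα.1.le
  rcases le_or_gt d c with hdc | hcd
  · simp [hdc, Real.zero_rpow (by linarith : 1 + α ≠ 0)]
  obtain ⟨hac, hdb⟩ :=
    (Icc_subset_Icc_iff hcd.le).1 (closure_Ioo hcd.ne ▸ closure_minimal hJ isClosed_Icc)
  have hfin : ∀ S, volume (Ioo c d ∩ S) ≠ ⊤ := fun S =>
    ne_top_of_le_ne_top measure_Ioo_lt_top.ne (measure_mono inter_subset_left)
  rw [Real.volume_Ioo, ENNReal.toReal_ofReal (by linarith),
    measure_diff_Icc_neg_eq_add measurableSet_Ioo (by positivity),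
    ENNReal.toReal_add (hfin _) (hfin _)]
  set v := (volume (Ioo c d ∩ Iio (-(2 * ε)))).toReal
  set u := (volume (Ioo c d ∩ Ioi (2 * ε))).toReal
  have hslice : ∀ t ∈ Icc (-ε) ε, (volume (g '' ((fun y => y + t) '' Ioo c d))).toReal ≤
      (d - c) - A₀ * ((v ^ (1 + α) + u ^ (1 + α)) / (1 + α)) := fun t ht => by
    have hsub : Icc (c + t) (d + t) ⊆ Icc a b :=
      Icc_subset_Icc (by linarith [ht.1]) (by linarith [ht.2])
    exact volume_image_add_const_Ioo_le hA₀.le hα₀ (by positivity)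
      ⟨by linarith [ht.1], by linarith [ht.2]⟩ hcd.le (fun y hy => hderiv y (hsub hy))
      (fun y hy => (hg'pos y (hsub hy)).le) (fun y hy => hg'ub y (hsub hy))
  have havg := inv_sub_mul_integral_le_of_forall_le (by linarith : -ε < ε)
    (fun t _ => ENNReal.toReal_nonneg) hslice
  rw [sub_neg_eq_add, ← two_mul] at havg
  have hpow := Real.two_rpow_neg_mul_add_rpow_le (u := v) (v := u) ENNReal.toReal_nonneg
    ENNReal.toReal_nonneg hα₀
  calc _ ≤ (d - c) - A₀ * ((v ^ (1 + α) + u ^ (1 + α)) / (1 + α)) := havg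
    _ ≤ (d - c) - A₀ * (2 ^ (-α) * (v + u) ^ (1 + α) / (1 + α)) := by gcongr
    _ = _ := by ring
end
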